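/- Let φ be a non-degenerate trace-valued (σ,ε)-sesquilinear form on V, let A and B be maximal totally isotropic subspaces with A ∩ B = 0, let n = dim(A) be finite, and let a₁,…,aₙ be a basis of A. Then for every k ∈ {1,…,n}, the subspace B ∩ ⋂_{i≠k} aᵢ⊥ is 1-dimensional and is not contained in aₖ⊥. -/

import Mathlib

/-!
An isotropic vector orthogonal to a maximal totally isotropic subspace lies in it. Hence a vector
of `B` orthogonal to all of `A` lies in `A ∩ B = 0`, i.e. the coordinate map `b ↦ (φ(aᵢ, b))ᵢ`
is injective on `B`. This gives `dim B ≤ dim A`, and with the roles of `A` and `B` exchanged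
`dim A ≤ dim B`, so the coordinate map is an isomorphism `B ≅ Kⁿ`. The subspace
`B ∩ ⋂_{i≠k} aᵢ⊥` is the preimage of the `k`-th coordinate line, spanned by the vector `b₀`
with coordinates `δᵢₖ`, and `φ(aₖ, b₀) = 1`.
-/

open MulOpposite

variable {K : Type*} [DivisionRing K]

/-- `σ` is an anti-automorphism of the division ring `K`. -/
def IsAntiAuto (σ : K → K) : Prop :=
  Function.Bijective σ ∧ (∀ a b : K, σ (a + b) = σ a + σ b) ∧
    ∀ a b : K, σ (a * b) = σ b * σ a

/-- `(σ, ε)` is an admissible pair: `σ` is an anti-automorphism, `ε ≠ 0`,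
`σ ε = ε⁻¹` and `σ ∘ σ` is conjugation by `ε`. -/
def IsAdmissiblePair (σ : K → K) (ε : K) : Prop :=
  IsAntiAuto σ ∧ ε ≠ 0 ∧ σ ε = ε⁻¹ ∧ ∀ t : K, σ (σ t) = ε * t * ε⁻¹

variable {V : Type*} [AddCommGroup V] [Module Kᵐᵒᵖ V]

/-- `φ` is a reflexive `(σ, ε)`-sesquilinear form on the right `K`-vector space `V`
(a right `K`-vector space is a left `Kᵐᵒᵖ`-vector space; right scalar multiplication
of `x` by `α` is `op α • x`). -/
def IsSesq (σ : K → K) (ε : K) (φ : V → V → K) : Prop :=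
  (∀ x y z : V, φ (x + y) z = φ x z + φ y z) ∧
  (∀ x y z : V, φ x (y + z) = φ x y + φ x z) ∧
  (∀ (α : K) (x y : V), φ (op α • x) y = σ α * φ x y) ∧
  (∀ (β : K) (x y : V), φ x (op β • y) = φ x y * β) ∧
  ∀ x y : V, φ y x = σ (φ x y) * ε

/-- A subspace `S` of `V` is totally isotropic for `φ` if `φ` vanishes identically on it. -/
def IsTotIso (φ : V → V → K) (S : Submodule Kᵐᵒᵖ V) : Prop :=
  ∀ x ∈ S, ∀ y ∈ S, φ x y = 0

/-- A maximal totally isotropic subspace: totally isotropic and maximal under inclusion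
among totally isotropic subspaces. -/
def IsMaxTotIso (φ : V → V → K) (S : Submodule Kᵐᵒᵖ V) : Prop :=
  IsTotIso φ S ∧ ∀ T : Submodule Kᵐᵒᵖ V, IsTotIso φ T → S ≤ T → T = S

/-- `φ` is trace-valued: every `φ(x,x)` is of the form `t + σ(t)ε`. -/
def IsTraceValued (σ : K → K) (ε : K) (φ : V → V → K) : Prop :=
  ∀ x : V, ∃ t : K, φ x x = t + σ t * ε

open Module

theorem IsAntiAuto.map_zero {σ : K → K} (hσ : IsAntiAuto σ) : σ 0 = 0 := by
  simpa using hσ.2.1 0 0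

namespace IsSesq

variable {σ : K → K} {ε : K} {φ : V → V → K}

theorem map_add_left (hφ : IsSesq σ ε φ) (x y z : V) : φ (x + y) z = φ x z + φ y z :=
  hφ.1 x y z

theorem map_add_right (hφ : IsSesq σ ε φ) (x y z : V) : φ x (y + z) = φ x y + φ x z :=
  hφ.2.1 x y z

theorem map_smul_left (hφ : IsSesq σ ε φ) (c : Kᵐᵒᵖ) (x y : V) :
    φ (c • x) y = σ (unop c) * φ x y := by
  simpa using hφ.2.2.1 (unop c) x y

theorem map_smul_right (hφ : IsSesq σ ε φ) (c : Kᵐᵒᵖ) (x y : V) :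
    φ x (c • y) = φ x y * unop c := by
  simpa using hφ.2.2.2.1 (unop c) x y

theorem eq_zero_symm (hφ : IsSesq σ ε φ) (hσ : σ 0 = 0) {x y : V} (h : φ x y = 0) :
    φ y x = 0 := by
  rw [hφ.2.2.2.2 x y, h, hσ, zero_mul]

-- Valued in `Kᵐᵒᵖ` so that `y ↦ φ x y` becomes linear for the left `Kᵐᵒᵖ`-module structure of `V`.
def toDual (hφ : IsSesq σ ε φ) (x : V) : Dual Kᵐᵒᵖ V where
  toFun y := op (φ x y)
  map_add' y z := by rw [hφ.map_add_right, op_add]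
  map_smul' c y := by rw [hφ.map_smul_right, op_mul, op_unop, smul_eq_mul, RingHom.id_apply]

@[simp]
theorem toDual_apply (hφ : IsSesq σ ε φ) (x y : V) : hφ.toDual x y = op (φ x y) := rfl

theorem map_zero_right (hφ : IsSesq σ ε φ) (x : V) : φ x 0 = 0 := by
  simpa using (hφ.toDual x).map_zero

theorem isTotIso_sup_span_singleton (hφ : IsSesq σ ε φ) (hσ : σ 0 = 0)
    {S : Submodule Kᵐᵒᵖ V} (hS : IsTotIso φ S) {v : V} (hvv : φ v v = 0)
    (hvS : ∀ s ∈ S, φ v s = 0) : IsTotIso φ (S ⊔ Submodule.span Kᵐᵒᵖ {v}) := by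
  intro x hx y hy
  obtain ⟨s, hs, _, hc, rfl⟩ := Submodule.mem_sup.mp hx
  obtain ⟨t, ht, _, hd, rfl⟩ := Submodule.mem_sup.mp hy
  obtain ⟨c, rfl⟩ := Submodule.mem_span_singleton.mp hc
  obtain ⟨d, rfl⟩ := Submodule.mem_span_singleton.mp hd
  simp only [hφ.map_add_left, hφ.map_add_right, hφ.map_smul_left, hφ.map_smul_right,
    hS s hs t ht, hφ.eq_zero_symm hσ (hvS s hs), hvS t ht, hvv]
  simp

theorem mem_of_isMaxTotIso (hφ : IsSesq σ ε φ) (hσ : σ 0 = 0) {S : Submodule Kᵐᵒᵖ V}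
    (hS : IsMaxTotIso φ S) {v : V} (hvv : φ v v = 0) (hvS : ∀ s ∈ S, φ v s = 0) : v ∈ S := by
  rw [← hS.2 _ (hφ.isTotIso_sup_span_singleton hσ hS.1 hvv hvS) le_sup_left]
  exact Submodule.mem_sup_right (Submodule.mem_span_singleton_self v)

variable {ι : Type*} {A B : Submodule Kᵐᵒᵖ V}

theorem eq_zero_of_orthogonal (hφ : IsSesq σ ε φ) (hσ : σ 0 = 0)
    (hA : IsMaxTotIso φ A) (hB : IsMaxTotIso φ B) (hAB : A ⊓ B = ⊥)
    {b : V} (hb : b ∈ B) (hbA : ∀ a ∈ A, φ a b = 0) : b = 0 := by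
  have hbA' : b ∈ A :=
    hφ.mem_of_isMaxTotIso hσ hA (hB.1 b hb b hb) fun a ha => hφ.eq_zero_symm hσ (hbA a ha)
  simpa [hAB] using Submodule.mem_inf.mpr ⟨hbA', hb⟩

def coordMap (hφ : IsSesq σ ε φ) (a : ι → V) : V →ₗ[Kᵐᵒᵖ] ι → Kᵐᵒᵖ :=
  LinearMap.pi fun i => hφ.toDual (a i)

@[simp]
theorem coordMap_apply (hφ : IsSesq σ ε φ) (a : ι → V) (x : V) (i : ι) :
    hφ.coordMap a x i = op (φ (a i) x) := rfl

theorem injective_coordMap_domRestrict (hφ : IsSesq σ ε φ) (hσ : σ 0 = 0)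
    (hA : IsMaxTotIso φ A) (hB : IsMaxTotIso φ B) (hAB : A ⊓ B = ⊥) (bas : Basis ι Kᵐᵒᵖ A) :
    Function.Injective ((hφ.coordMap fun i => (bas i : V)).domRestrict B) := by
  refine (injective_iff_map_eq_zero _).mpr fun ⟨b, hb⟩ hL => ?_
  have hbas : (hφ.toDual b).comp A.subtype = 0 := bas.ext fun i => by
    simpa using hφ.eq_zero_symm hσ (op_eq_zero_iff _ |>.mp (congrFun hL i))
  refine Subtype.ext (hφ.eq_zero_of_orthogonal hσ hA hB hAB hb fun a ha => ?_)
  exact hφ.eq_zero_symm hσ (op_eq_zero_iff _ |>.mp (LinearMap.congr_fun hbas ⟨a, ha⟩))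

theorem finite_of_isMaxTotIso (hφ : IsSesq σ ε φ) (hσ : σ 0 = 0) [Finite ι]
    (hA : IsMaxTotIso φ A) (hB : IsMaxTotIso φ B) (hAB : A ⊓ B = ⊥) (bas : Basis ι Kᵐᵒᵖ A) :
    Module.Finite Kᵐᵒᵖ B :=
  have := Fintype.ofFinite ι
  Module.Finite.of_injective _ (hφ.injective_coordMap_domRestrict hσ hA hB hAB bas)

theorem finrank_le_of_isMaxTotIso (hφ : IsSesq σ ε φ) (hσ : σ 0 = 0) [Module.Finite Kᵐᵒᵖ A]
    (hA : IsMaxTotIso φ A) (hB : IsMaxTotIso φ B) (hAB : A ⊓ B = ⊥) :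
    finrank Kᵐᵒᵖ B ≤ finrank Kᵐᵒᵖ A := by
  let bas := finBasis Kᵐᵒᵖ A
  calc finrank Kᵐᵒᵖ B ≤ finrank Kᵐᵒᵖ (Fin (finrank Kᵐᵒᵖ A) → Kᵐᵒᵖ) :=
        LinearMap.finrank_le_finrank_of_injective
          (hφ.injective_coordMap_domRestrict hσ hA hB hAB bas)
    _ = finrank Kᵐᵒᵖ A := by simp

theorem bijective_coordMap_domRestrict (hφ : IsSesq σ ε φ) (hσ : σ 0 = 0) [Fintype ι]
    (hA : IsMaxTotIso φ A) (hB : IsMaxTotIso φ B) (hAB : A ⊓ B = ⊥) (bas : Basis ι Kᵐᵒᵖ A) :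
    Function.Bijective ((hφ.coordMap fun i => (bas i : V)).domRestrict B) := by
  have hinj := hφ.injective_coordMap_domRestrict hσ hA hB hAB bas
  have := Module.Finite.of_basis bas
  have := hφ.finite_of_isMaxTotIso hσ hA hB hAB bas
  have hrank : finrank Kᵐᵒᵖ B = finrank Kᵐᵒᵖ (ι → Kᵐᵒᵖ) := by
    rw [finrank_pi, ← finrank_eq_card_basis bas]
    exact (hφ.finrank_le_of_isMaxTotIso hσ hA hB hAB).antisymm
      (hφ.finrank_le_of_isMaxTotIso hσ hB hA (inf_comm A B ▸ hAB))
  exact ⟨hinj, (LinearMap.injective_iff_surjective_of_finrank_eq_finrank hrank).mp hinj⟩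

theorem eq_span_singleton_of_coordMap_eq_single (hφ : IsSesq σ ε φ) [DecidableEq ι]
    {a : ι → V} (hinj : Function.Injective ((hφ.coordMap a).domRestrict B)) {k : ι} {b₀ : V}
    (hb₀B : b₀ ∈ B) (hb₀ : hφ.coordMap a b₀ = Pi.single k 1) {W : Submodule Kᵐᵒᵖ V}
    (hW : ∀ x, x ∈ W ↔ x ∈ B ∧ ∀ i, i ≠ k → φ (a i) x = 0) :
    W = Submodule.span Kᵐᵒᵖ {b₀} := by
  have hb₀k : φ (a k) b₀ = 1 := by simpa using congrFun hb₀ k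
  have hb₀i (i : ι) (hi : i ≠ k) : φ (a i) b₀ = 0 := by simpa [hi] using congrFun hb₀ i
  refine le_antisymm (fun x hx => ?_) (Submodule.span_le.mpr
    (Set.singleton_subset_iff.mpr ((hW b₀).mpr ⟨hb₀B, hb₀i⟩)))
  obtain ⟨hxB, hx⟩ := (hW x).mp hx
  refine Submodule.mem_span_singleton.mpr ⟨op (φ (a k) x), congrArg Subtype.val <|
    hinj (a₁ := ⟨_, B.smul_mem _ hb₀B⟩) (a₂ := ⟨x, hxB⟩) (funext fun i => ?_)⟩
  rcases eq_or_ne i k with rfl | hi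
  · simp [hφ.map_smul_right, hb₀k]
  · simp [hφ.map_smul_right, hb₀i i hi, hx i hi]

end IsSesq

theorem stmt_11_general (σ : K → K) (ε : K) (hpair : IsAdmissiblePair σ ε)
    (φ : V → V → K) (hφ : IsSesq σ ε φ)
    (A B : Submodule Kᵐᵒᵖ V) (hA : IsMaxTotIso φ A) (hB : IsMaxTotIso φ B)
    (hAB : A ⊓ B = ⊥)
    (n : ℕ) (bas : Module.Basis (Fin n) Kᵐᵒᵖ ↥A)
    (k : Fin n) (W : Submodule Kᵐᵒᵖ V)
    (hW : (W : Set V) =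
      {x : V | x ∈ B ∧ ∀ i : Fin n, i ≠ k → φ ((bas i : ↥A) : V) x = 0}) :
    Module.rank Kᵐᵒᵖ ↥W = 1 ∧ ¬ ∀ x ∈ W, φ ((bas k : ↥A) : V) x = 0 := by
  have hσ := hpair.1.map_zero
  have hL := hφ.bijective_coordMap_domRestrict hσ hA hB hAB bas
  obtain ⟨⟨b₀, hb₀B⟩, hb₀⟩ := hL.2 (Pi.single k 1)
  have hWspan := hφ.eq_span_singleton_of_coordMap_eq_single hL.1 hb₀B hb₀ (Set.ext_iff.mp hW)
  have hb₀k : φ (bas k) b₀ = 1 := by simpa using congrFun hb₀ k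
  have hb₀ne : b₀ ≠ 0 := by
    rintro rfl
    exact zero_ne_one ((hφ.map_zero_right _).symm.trans hb₀k)
  have hb₀W : b₀ ∈ W := hWspan ▸ Submodule.mem_span_singleton_self b₀
  refine ⟨?_, fun h => one_ne_zero (hb₀k ▸ h b₀ hb₀W)⟩
  rw [hWspan, ← finrank_eq_rank, finrank_span_singleton hb₀ne, Nat.cast_one]

/-- Let `φ` be non-degenerate and trace-valued, `A, B` maximal totally
isotropic with `A ∩ B = 0`, and `a₁,…,aₙ` a basis of `A` (`n = dim A` finite). Then for
every `k`, the subspace `B ∩ ⋂_{i≠k} aᵢ⊥` is 1-dimensional and not contained in `aₖ⊥`. -/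
theorem stmt_11 (σ : K → K) (ε : K) (hpair : IsAdmissiblePair σ ε)
    (φ : V → V → K) (hφ : IsSesq σ ε φ) (htv : IsTraceValued σ ε φ)
    (hnd : ∀ a : V, (∀ x : V, φ a x = 0) → a = 0)
    (A B : Submodule Kᵐᵒᵖ V) (hA : IsMaxTotIso φ A) (hB : IsMaxTotIso φ B)
    (hAB : A ⊓ B = ⊥)
    (n : ℕ) (bas : Module.Basis (Fin n) Kᵐᵒᵖ ↥A)
    (k : Fin n) (W : Submodule Kᵐᵒᵖ V)
    (hW : (W : Set V) =
      {x : V | x ∈ B ∧ ∀ i : Fin n, i ≠ k → φ ((bas i : ↥A) : V) x = 0}) :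
    Module.rank Kᵐᵒᵖ ↥W = 1 ∧ ¬ ∀ x ∈ W, φ ((bas k : ↥A) : V) x = 0 :=
  stmt_11_general σ ε hpair φ hφ A B hA hB hAB n bas k W hW
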